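/- Suppose X : [t_*,∞) → ℝ is differentiable and satisfies X'(t) + 1 + 2X(t) - √(1+4X(t)) = 0 for all t ≥ t_*, X(t_*) = 1/4, and 0 < X(t) ≤ 1/4 for all t ≥ t_*. Then for all t ≥ t_*, 1/(4 + 3(t - t_*)) ≤ X(t) ≤ 1/(4 + (t - t_*)). -/

import Mathlib

/-!
Writing `s = √(1 + 4x)`, one has `1 + 2x - s = (s - 1)² / 2` and `x² = (s - 1)² (s + 1)² / 16`,
so for `0 ≤ x ≤ 1/4` the right-hand side of `X' = -(1 + 2X - √(1 + 4X))` lies between `-3X²` and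
`-X²`. Hence `(1/X)'` lies between `1` and `3`, and integrating from `t_*`, where `1/X = 4`,
gives `4 + (t - t_*) ≤ 1/X(t) ≤ 4 + 3(t - t_*)`.
-/

open Real Set

lemma one_add_two_mul_sub_sqrt_le {x : ℝ} (hx : 0 ≤ x) :
    1 + 2 * x - √(1 + 4 * x) ≤ 3 * x ^ 2 := by
  set s := √(1 + 4 * x)
  have hs : s ^ 2 = 1 + 4 * x := sq_sqrt (by linarith)
  have hs1 : 1 ≤ s := by nlinarith [sqrt_nonneg (1 + 4 * x)]
  nlinarith [mul_nonneg (sq_nonneg (s - 1)) (by nlinarith : (0 : ℝ) ≤ 3 * (s + 1) ^ 2 - 8)]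

lemma sq_le_one_add_two_mul_sub_sqrt {x : ℝ} (hx₀ : -(1 / 4) ≤ x) (hx₁ : x ≤ 1 / 4) :
    x ^ 2 ≤ 1 + 2 * x - √(1 + 4 * x) := by
  set s := √(1 + 4 * x)
  have hs : s ^ 2 = 1 + 4 * x := sq_sqrt (by linarith)
  have hs0 : 0 ≤ s := sqrt_nonneg _
  have hs2 : s ≤ 3 / 2 := by nlinarith
  nlinarith [mul_nonneg (sq_nonneg (s - 1)) (by nlinarith : (0 : ℝ) ≤ 8 - (s + 1) ^ 2)]

section IntegrateDerivBound

variable {f f' : ℝ → ℝ} {a C t : ℝ}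

lemma mul_sub_le_sub_of_hasDerivAt_Ici (hf : ∀ s, a ≤ s → HasDerivAt f (f' s) s)
    (hC : ∀ s, a < s → C ≤ f' s) (ht : a ≤ t) : C * (t - a) ≤ f t - f a := by
  refine (convex_Ici a).mul_sub_le_image_sub_of_le_deriv
    (fun s hs => (hf s hs).continuousAt.continuousWithinAt) ?_ ?_ a self_mem_Ici t ht ht
  · rw [interior_Ici]
    exact fun s hs => (hf s hs.le).differentiableAt.differentiableWithinAt
  · rw [interior_Ici]
    exact fun s hs => (hf s hs.le).deriv ▸ hC s hs

lemma sub_le_mul_sub_of_hasDerivAt_Ici (hf : ∀ s, a ≤ s → HasDerivAt f (f' s) s)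
    (hC : ∀ s, a < s → f' s ≤ C) (ht : a ≤ t) : f t - f a ≤ C * (t - a) := by
  refine (convex_Ici a).image_sub_le_mul_sub_of_deriv_le
    (fun s hs => (hf s hs).continuousAt.continuousWithinAt) ?_ ?_ a self_mem_Ici t ht ht
  · rw [interior_Ici]
    exact fun s hs => (hf s hs.le).differentiableAt.differentiableWithinAt
  · rw [interior_Ici]
    exact fun s hs => (hf s hs.le).deriv ▸ hC s hs

end IntegrateDerivBound

section RiccatiComparison

variable {Y Y' : ℝ → ℝ} {a m M t : ℝ}

lemma hasDerivAt_inv_of_pos (hY : ∀ s, a ≤ s → HasDerivAt Y (Y' s) s)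
    (hpos : ∀ s, a ≤ s → 0 < Y s) :
    ∀ s, a ≤ s → HasDerivAt (fun u => (Y u)⁻¹) (-Y' s / Y s ^ 2) s :=
  fun s hs => (hY s hs).inv (hpos s hs).ne'

lemma le_inv_add_mul_of_le_neg_deriv (hY : ∀ s, a ≤ s → HasDerivAt Y (Y' s) s)
    (hpos : ∀ s, a ≤ s → 0 < Y s) (hm₀ : 0 ≤ m) (hm : ∀ s, a ≤ s → m * Y s ^ 2 ≤ -Y' s)
    (ht : a ≤ t) :
    Y t ≤ ((Y a)⁻¹ + m * (t - a))⁻¹ := by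
  have hinv : m * (t - a) ≤ (Y t)⁻¹ - (Y a)⁻¹ :=
    mul_sub_le_sub_of_hasDerivAt_Ici (hasDerivAt_inv_of_pos hY hpos)
      (fun s hs => (le_div_iff₀ (pow_pos (hpos s hs.le) 2)).2 (hm s hs.le)) ht
  have hYa := inv_pos.2 (hpos a le_rfl)
  rw [le_inv_comm₀ (hpos t ht) (by nlinarith)]
  linarith

lemma inv_add_mul_le_of_neg_deriv_le (hY : ∀ s, a ≤ s → HasDerivAt Y (Y' s) s)
    (hpos : ∀ s, a ≤ s → 0 < Y s) (hM : ∀ s, a ≤ s → -Y' s ≤ M * Y s ^ 2) (ht : a ≤ t) :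
    ((Y a)⁻¹ + M * (t - a))⁻¹ ≤ Y t := by
  have hinv : (Y t)⁻¹ - (Y a)⁻¹ ≤ M * (t - a) :=
    sub_le_mul_sub_of_hasDerivAt_Ici (hasDerivAt_inv_of_pos hY hpos)
      (fun s hs => (div_le_iff₀ (pow_pos (hpos s hs.le) 2)).2 (hM s hs.le)) ht
  have hYt := inv_pos.2 (hpos t ht)
  rw [inv_le_comm₀ (by linarith) (hpos t ht)]
  linarith

end RiccatiComparison

theorem stmt_3 (X : ℝ → ℝ) (tstar : ℝ)
    (hdiff : Differentiable ℝ X)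
    (hODE : ∀ t : ℝ, tstar ≤ t → deriv X t + 1 + 2 * X t - Real.sqrt (1 + 4 * X t) = 0)
    (hXtstar : X tstar = 1 / 4)
    (hbound : ∀ t : ℝ, tstar ≤ t → 0 < X t ∧ X t ≤ 1 / 4) :
    ∀ t : ℝ, tstar ≤ t →
      1 / (4 + 3 * (t - tstar)) ≤ X t ∧ X t ≤ 1 / (4 + (t - tstar)) := by
  intro t ht
  have hX : ∀ s, tstar ≤ s → HasDerivAt X (deriv X s) s := fun s _ => (hdiff s).hasDerivAt
  have hpos : ∀ s, tstar ≤ s → 0 < X s := fun s hs => (hbound s hs).1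
  have hrhs : ∀ s, tstar ≤ s → -deriv X s = 1 + 2 * X s - √(1 + 4 * X s) :=
    fun s hs => by linarith [hODE s hs]
  have lower := inv_add_mul_le_of_neg_deriv_le (M := 3) hX hpos
    (fun s hs => hrhs s hs ▸ one_add_two_mul_sub_sqrt_le (hpos s hs).le) ht
  have upper := le_inv_add_mul_of_le_neg_deriv hX hpos zero_le_one (fun s hs => by
    rw [one_mul, hrhs s hs]
    exact sq_le_one_add_two_mul_sub_sqrt (by linarith [hpos s hs]) (hbound s hs).2) ht
  rw [hXtstar] at lower upper
  norm_num [one_div] at lower upper ⊢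
  exact ⟨lower, upper⟩
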